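/- arXiv:2604.14368 — 6 statements merged into one kernel-verified Lean document; each statement's English description precedes it below -/
import Mathlib

section
/- Let n be a positive integer, 0 < σₙ ≤ σ₁, G ≥ 0 and Δ > 0. Let H ∈ ℝ^{n×n} be symmetric with σₙI ⪯ H ⪯ σ₁I, let g ∈ ℝⁿ with ‖g‖ ≤ G, and let S ⊆ ℝⁿ be a set containing some point d̄ with ‖d̄‖ ≤ Δ. If d* ∈ S satisfies gᵀd* + (1/2)d*ᵀHd* ≤ gᵀd + (1/2)dᵀHd for all d ∈ S, then ‖d*‖ ≤ (4G + σ₁Δ)/σₙ. -/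
noncomputable section

/-- `Vec n` is `ℝⁿ` with the Euclidean norm. -/
abbrev Vec (n : ℕ) := EuclideanSpace ℝ (Fin n)

/-- The dot product `gᵀd`. -/
def dotp {n : ℕ} (g d : Vec n) : ℝ := ∑ i, g i * d i

/-- The quadratic form `dᵀHd`. -/
def quad {n : ℕ} (H : Matrix (Fin n) (Fin n) ℝ) (d : Vec n) : ℝ :=
  ∑ i, ∑ j, d i * H i j * d j

lemma quad_nonneg_of_posSemidef {n : ℕ} (M : Matrix (Fin n) (Fin n) ℝ)
    (h : M.PosSemidef) (d : Vec n) : 0 ≤ quad M d := by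
  have := h.dotProduct_mulVec_nonneg (WithLp.ofLp d)
  simpa [dotProduct, Matrix.mulVec, quad, Finset.mul_sum, mul_assoc] using this

lemma quad_smul_one {n : ℕ} (σ : ℝ) (d : Vec n) :
    quad (σ • (1 : Matrix (Fin n) (Fin n) ℝ)) d = σ * ‖d‖ ^ 2 := by
  have hnorm : ‖d‖ ^ 2 = ∑ i, d i ^ 2 := by
    rw [← real_inner_self_eq_norm_sq]
    simp only [PiLp.inner_apply, RCLike.inner_apply, conj_trivial, sq]
  simp [quad, Matrix.one_apply, mul_ite, Finset.mul_sum, hnorm, Finset.sum_ite_eq]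
  exact Finset.sum_congr rfl fun i _ => by ring

lemma quad_sub {n : ℕ} (A B : Matrix (Fin n) (Fin n) ℝ) (d : Vec n) :
    quad (A - B) d = quad A d - quad B d := by
  simp [quad, sub_mul, mul_sub, Finset.sum_sub_distrib]

lemma abs_dotp_le {n : ℕ} (g d : Vec n) : |dotp g d| ≤ ‖g‖ * ‖d‖ := by
  have := abs_real_inner_le_norm g d
  simpa [PiLp.inner_apply, dotp, mul_comm] using this

/-- For a symmetric matrix ordering `A ⪯ B` means `B - A` is positive semidefinite.
If `d* ∈ S` minimizes `gᵀd + (1/2)dᵀHd` over `S`, where `S` contains a point of norm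
at most `Δ`, `‖g‖ ≤ G` and `σₙI ⪯ H ⪯ σ₁I`, then `‖d*‖ ≤ (4G + σ₁Δ)/σₙ`. -/
theorem norm_bound_of_qp_minimizer
    {n : ℕ} (hn : 0 < n) (σn σ1 G Δ : ℝ)
    (hσn : 0 < σn) (hσ : σn ≤ σ1) (hG : 0 ≤ G) (hΔ : 0 < Δ)
    (H : Matrix (Fin n) (Fin n) ℝ) (hsymm : H.IsSymm)
    (hlow : (H - σn • (1 : Matrix (Fin n) (Fin n) ℝ)).PosSemidef)
    (hupp : (σ1 • (1 : Matrix (Fin n) (Fin n) ℝ) - H).PosSemidef)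
    (g : Vec n) (hg : ‖g‖ ≤ G)
    (S : Set (Vec n)) (dbar : Vec n) (hdbarS : dbar ∈ S) (hdbar : ‖dbar‖ ≤ Δ)
    (dstar : Vec n) (hdstarS : dstar ∈ S)
    (hopt : ∀ d ∈ S, dotp g dstar + (1/2) * quad H dstar ≤ dotp g d + (1/2) * quad H d) :
    ‖dstar‖ ≤ (4 * G + σ1 * Δ) / σn := by
  set t := ‖dstar‖ with ht
  have ht0 : 0 ≤ t := norm_nonneg _
  have h1 : σn * t ^ 2 ≤ quad H dstar := by
    have := quad_nonneg_of_posSemidef _ hlow dstar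
    rw [quad_sub, quad_smul_one] at this
    linarith
  have h2 : quad H dbar ≤ σ1 * ‖dbar‖ ^ 2 := by
    have := quad_nonneg_of_posSemidef _ hupp dbar
    rw [quad_sub, quad_smul_one] at this
    linarith
  have h3 : -(G * t) ≤ dotp g dstar := by
    have h := abs_dotp_le g dstar
    have : ‖g‖ * t ≤ G * t := mul_le_mul_of_nonneg_right hg ht0
    have := (abs_le.mp h).1
    linarith
  have h4 : dotp g dbar ≤ G * Δ := by
    have h := abs_dotp_le g dbar
    have h' : ‖g‖ * ‖dbar‖ ≤ G * Δ :=
      mul_le_mul hg hdbar (norm_nonneg _) hG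
    have := (abs_le.mp h).2
    linarith
  have hbar2 : ‖dbar‖ ^ 2 ≤ Δ ^ 2 := by
    have := norm_nonneg dbar
    nlinarith
  have key : σn * t ^ 2 ≤ 2 * G * t + 2 * G * Δ + σ1 * Δ ^ 2 := by
    have hopt' := hopt dbar hdbarS
    nlinarith
  rw [le_div_iff₀ hσn]
  nlinarith [mul_nonneg hG ht0, mul_nonneg hG hΔ.le, sq_nonneg (t - Δ),
    mul_nonneg (mul_nonneg hG ht0) ht0, mul_pos hΔ hΔ, sq_nonneg t,
    mul_nonneg hΔ.le ht0]
end
end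

section
/- Let Δ > 0 and ε_c, ε_J ≥ 0. Let c, c̃ ∈ ℝᵐ and M, M̃ ∈ ℝ^{m×n} satisfy ‖c̃ − c‖_∞ ≤ ε_c and ‖M̃ − M‖_∞ ≤ ε_J. Then |min_{‖d‖≤Δ} ‖max{c̃ + M̃d, 0}‖_∞ − min_{‖d‖≤Δ} ‖max{c + Md, 0}‖_∞| ≤ ε_c + Δ·ε_J, where both minima are over the Euclidean ball {d ∈ ℝⁿ : ‖d‖ ≤ Δ}. -/
noncomputable section

/-- Componentwise positive part `max{u, 0}`. -/
def posv {m : ℕ} (u : Fin m → ℝ) : Fin m → ℝ := fun i => max (u i) 0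

/-- The ℓ∞ norm `‖u‖_∞ = maxᵢ |uᵢ|`. -/
def normInf {m : ℕ} (u : Fin m → ℝ) : ℝ := ⨆ i, |u i|

/-- The matrix ℓ∞ norm: maximum ℓ¹ norm of the rows. -/
def matNormInf {m n : ℕ} (M : Matrix (Fin m) (Fin n) ℝ) : ℝ := ⨆ i, ∑ j, |M i j|

/-- `min_{‖d‖ ≤ Δ} ‖max{c + Md, 0}‖_∞`, the minimal linearized constraint violation
over the Euclidean ball of radius `Δ`. -/
def vinf {m n : ℕ} (Δ : ℝ) (c : Fin m → ℝ) (M : Matrix (Fin m) (Fin n) ℝ) : ℝ :=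
  sInf {t | ∃ d : Vec n, ‖d‖ ≤ Δ ∧ t = normInf (posv (c + M.mulVec d))}

lemma normInf_nonneg {m : ℕ} (u : Fin m → ℝ) : 0 ≤ normInf u :=
  Real.iSup_nonneg fun i => abs_nonneg _

lemma le_normInf {m : ℕ} (u : Fin m → ℝ) (i : Fin m) : |u i| ≤ normInf u := by
  unfold normInf
  exact le_ciSup (Set.Finite.bddAbove (Set.finite_range fun i => |u i|)) i

lemma abs_coord_le_norm {n : ℕ} (d : Vec n) (j : Fin n) : |d j| ≤ ‖d‖ := by
  rw [EuclideanSpace.norm_eq]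
  have : |d j| = Real.sqrt (|d j| ^ 2) := by
    rw [Real.sqrt_sq (abs_nonneg _)]
  rw [this]
  apply Real.sqrt_le_sqrt
  have := Finset.single_le_sum (f := fun j => ‖d j‖ ^ 2)
    (fun i _ => by positivity) (Finset.mem_univ j)
  simpa [sq_abs] using this

lemma mulVec_bound {m n : ℕ} (N : Matrix (Fin m) (Fin n) ℝ) (d : Vec n) :
    normInf (N.mulVec d) ≤ matNormInf N * ‖d‖ := by
  apply Real.iSup_le _ (mul_nonneg (Real.iSup_nonneg fun i =>
    Finset.sum_nonneg fun j _ => abs_nonneg _) (norm_nonneg _))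
  intro i
  calc |N.mulVec d i| = |∑ j, N i j * d j| := by rfl
    _ ≤ ∑ j, |N i j * d j| := Finset.abs_sum_le_sum_abs _ _
    _ = ∑ j, |N i j| * |d j| := by simp [abs_mul]
    _ ≤ ∑ j, |N i j| * ‖d‖ := by
        apply Finset.sum_le_sum
        intro j _
        exact mul_le_mul_of_nonneg_left (abs_coord_le_norm d j) (abs_nonneg _)
    _ = (∑ j, |N i j|) * ‖d‖ := by rw [Finset.sum_mul]
    _ ≤ matNormInf N * ‖d‖ := by
        apply mul_le_mul_of_nonneg_right _ (norm_nonneg _)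
        unfold matNormInf
        exact le_ciSup (Set.Finite.bddAbove
          (Set.finite_range fun i => ∑ j, |N i j|)) i

lemma normInf_posv_le {m : ℕ} (u v : Fin m → ℝ) :
    normInf (posv u) ≤ normInf (posv v) + normInf (u - v) := by
  apply Real.iSup_le _ (add_nonneg (normInf_nonneg _) (normInf_nonneg _))
  intro i
  have h1 : |posv u i| = max (u i) 0 := abs_of_nonneg (le_max_right _ _)
  rw [h1]
  have h2 : max (u i) 0 ≤ max (v i) 0 + |u i - v i| := by
    apply max_le
    · have : u i ≤ v i + |u i - v i| := by
        have := le_abs_self (u i - v i); linarith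
      calc u i ≤ v i + |u i - v i| := this
        _ ≤ max (v i) 0 + |u i - v i| := by
            exact add_le_add (le_max_left _ _) le_rfl
    · positivity
  calc max (u i) 0 ≤ max (v i) 0 + |u i - v i| := h2
    _ ≤ normInf (posv v) + normInf (u - v) := by
        apply add_le_add
        · have := le_normInf (posv v) i
          rwa [abs_of_nonneg (le_max_right _ _)] at this
        · exact le_normInf (u - v) i

/-- The minimal linearized constraint violations of noisy and exact data differ by
at most `ε_c + Δ·ε_J`. -/
theorem abs_vinf_sub_vinf_le
    {m n : ℕ} (Δ εc εJ : ℝ) (hΔ : 0 < Δ) (hεc : 0 ≤ εc) (hεJ : 0 ≤ εJ)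
    (c ct : Fin m → ℝ) (M Mt : Matrix (Fin m) (Fin n) ℝ)
    (hc : normInf (ct - c) ≤ εc)
    (hM : matNormInf (Mt - M) ≤ εJ) :
    |vinf Δ ct Mt - vinf Δ c M| ≤ εc + Δ * εJ := by
  set B := εc + Δ * εJ with hB
  have hc' : normInf (c - ct) ≤ εc := by
    have : normInf (c - ct) = normInf (ct - c) := by
      unfold normInf
      congr 1; funext i; simp [abs_sub_comm]
    rwa [this]
  have hM' : matNormInf (M - Mt) ≤ εJ := by
    have : matNormInf (M - Mt) = matNormInf (Mt - M) := by
      unfold matNormInf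
      congr 1; funext i
      apply Finset.sum_congr rfl
      intro j _
      simp [abs_sub_comm]
    rwa [this]
  -- key pointwise bound
  have key : ∀ (c1 c2 : Fin m → ℝ) (M1 M2 : Matrix (Fin m) (Fin n) ℝ)
      (_ : normInf (c1 - c2) ≤ εc) (_ : matNormInf (M1 - M2) ≤ εJ)
      (d : Vec n) (_ : ‖d‖ ≤ Δ),
      normInf (posv (c1 + M1.mulVec d)) ≤ normInf (posv (c2 + M2.mulVec d)) + B := by
    intro c1 c2 M1 M2 h1 h2 d hd
    have hdiff : (c1 + M1.mulVec d) - (c2 + M2.mulVec d)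
        = (c1 - c2) + (M1 - M2).mulVec d := by
      funext i
      simp [Matrix.mulVec, dotProduct, sub_mul, Finset.sum_sub_distrib]
      ring
    have step1 := normInf_posv_le (c1 + M1.mulVec d) (c2 + M2.mulVec d)
    have step2 : normInf ((c1 + M1.mulVec d) - (c2 + M2.mulVec d)) ≤ B := by
      rw [hdiff]
      have tri : normInf ((c1 - c2) + (M1 - M2).mulVec d)
          ≤ normInf (c1 - c2) + normInf ((M1 - M2).mulVec d) := by
        apply Real.iSup_le _ (add_nonneg (normInf_nonneg _) (normInf_nonneg _))
        intro i
        calc |((c1 - c2) + (M1 - M2).mulVec d) i|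
            ≤ |(c1 - c2) i| + |(M1 - M2).mulVec d i| := abs_add_le _ _
          _ ≤ normInf (c1 - c2) + normInf ((M1 - M2).mulVec d) :=
              add_le_add (le_normInf _ i) (le_normInf _ i)
      have hmv : normInf ((M1 - M2).mulVec d) ≤ Δ * εJ := by
        calc normInf ((M1 - M2).mulVec d) ≤ matNormInf (M1 - M2) * ‖d‖ :=
              mulVec_bound _ _
          _ ≤ εJ * Δ := by
              apply mul_le_mul h2 hd (norm_nonneg _) hεJ
          _ = Δ * εJ := mul_comm _ _
      rw [hB]
      linarith
    linarith
  -- the sets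
  set S := {t | ∃ d : Vec n, ‖d‖ ≤ Δ ∧ t = normInf (posv (ct + Mt.mulVec d))} with hS
  set T := {t | ∃ d : Vec n, ‖d‖ ≤ Δ ∧ t = normInf (posv (c + M.mulVec d))} with hT
  have hSne : S.Nonempty := ⟨_, 0, by simp [hΔ.le], rfl⟩
  have hTne : T.Nonempty := ⟨_, 0, by simp [hΔ.le], rfl⟩
  have hSbdd : BddBelow S := by
    refine ⟨0, fun t ht => ?_⟩
    obtain ⟨d, _, rfl⟩ := ht
    exact normInf_nonneg _
  have hTbdd : BddBelow T := by
    refine ⟨0, fun t ht => ?_⟩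
    obtain ⟨d, _, rfl⟩ := ht
    exact normInf_nonneg _
  have dir1 : sInf S ≤ sInf T + B := by
    rw [← sub_le_iff_le_add]
    apply le_csInf hTne
    intro t ht
    obtain ⟨d, hd, rfl⟩ := ht
    rw [sub_le_iff_le_add]
    calc sInf S ≤ normInf (posv (ct + Mt.mulVec d)) := csInf_le hSbdd ⟨d, hd, rfl⟩
      _ ≤ normInf (posv (c + M.mulVec d)) + B := key ct c Mt M hc hM d hd
  have dir2 : sInf T ≤ sInf S + B := by
    rw [← sub_le_iff_le_add]
    apply le_csInf hSne
    intro t ht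
    obtain ⟨d, hd, rfl⟩ := ht
    rw [sub_le_iff_le_add]
    calc sInf T ≤ normInf (posv (c + M.mulVec d)) := csInf_le hTbdd ⟨d, hd, rfl⟩
      _ ≤ normInf (posv (ct + Mt.mulVec d)) + B := key c ct M Mt hc' hM' d hd
  have : vinf Δ ct Mt = sInf S := rfl
  have : vinf Δ c M = sInf T := rfl
  rw [abs_sub_le_iff]
  constructor <;> [skip; skip] <;>
    simp only [vinf, ← hS, ← hT] <;> linarith
end
end

section
/- Let g ∈ ℝⁿ, let H ∈ ℝ^{n×n} be symmetric positive semidefinite, let d ∈ ℝⁿ, let θ₁ ∈ (0,1), π > 0, and let a ≥ 0. Write t = gᵀd + (1/2)dᵀHd. If −t + πa ≥ θ₁·π·a, then −t + πa ≥ θ₁²·(|t| + πa). -/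
/-!
With `p = πa ≥ 0` the claim only involves the real numbers `t`, `p`, `θ₁`. If `t ≤ 0` then
`|t| + p = -t + p ≥ 0` and `θ₁² ≤ 1`. If `t ≥ 0` then `|t| + p = 2p - (-t + p)`, and the claim
follows from the hypothesis `-t + p ≥ θ₁p` because `2θ₁ ≤ 1 + θ₁²`.
-/

noncomputable section

theorem sq_mul_abs_add_le_neg_add {t p θ : ℝ} (hθ : 0 ≤ θ) (hθ1 : θ ≤ 1) (hp : 0 ≤ p)
    (h : θ * p ≤ -t + p) : θ ^ 2 * (|t| + p) ≤ -t + p := by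
  rcases le_total t 0 with ht | ht
  · rw [abs_of_nonpos ht]
    calc θ ^ 2 * (-t + p) ≤ 1 * (-t + p) :=
          mul_le_mul_of_nonneg_right (pow_le_one₀ hθ hθ1) (by linarith)
      _ = -t + p := one_mul _
  · rw [abs_of_nonneg ht]
    have amgm : 2 * θ ≤ 1 + θ ^ 2 := by nlinarith [sq_nonneg (1 - θ)]
    have h₁ : 2 * θ * (θ * p) ≤ (1 + θ ^ 2) * (θ * p) :=
      mul_le_mul_of_nonneg_right amgm (mul_nonneg hθ hp)
    have h₂ : (1 + θ ^ 2) * (θ * p) ≤ (1 + θ ^ 2) * (-t + p) :=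
      mul_le_mul_of_nonneg_left h (by positivity)
    linarith

theorem merit_model_decrease_lower_bound_general
    {n : ℕ} (g : Vec n) (H : Matrix (Fin n) (Fin n) ℝ)
    (d : Vec n) (θ1 π a : ℝ)
    (hθ1 : 0 < θ1) (hθ1' : θ1 < 1) (hπ : 0 < π) (ha : 0 ≤ a)
    (h : -(dotp g d + (1/2) * quad H d) + π * a ≥ θ1 * π * a) :
    -(dotp g d + (1/2) * quad H d) + π * a
      ≥ θ1 ^ 2 * (|dotp g d + (1/2) * quad H d| + π * a) :=
  sq_mul_abs_add_le_neg_add hθ1.le hθ1'.le (mul_nonneg hπ.le ha) (by rwa [← mul_assoc])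

/-- If the penalty-parameter update condition `−t + πa ≥ θ₁πa` holds, where
`t = gᵀd + (1/2)dᵀHd` and `a ≥ 0`, then `−t + πa ≥ θ₁²(|t| + πa)`. -/
theorem merit_model_decrease_lower_bound
    {n : ℕ} (g : Vec n) (H : Matrix (Fin n) (Fin n) ℝ) (hH : H.PosSemidef)
    (d : Vec n) (θ1 π a : ℝ)
    (hθ1 : 0 < θ1) (hθ1' : θ1 < 1) (hπ : 0 < π) (ha : 0 ≤ a)
    (h : -(dotp g d + (1/2) * quad H d) + π * a ≥ θ1 * π * a) :
    -(dotp g d + (1/2) * quad H d) + π * a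
      ≥ θ1 ^ 2 * (|dotp g d + (1/2) * quad H d| + π * a) :=
  merit_model_decrease_lower_bound_general g H d θ1 π a hθ1 hθ1' hπ ha h
end
end

section
/- Let f : ℝⁿ → ℝ and c = (c¹,…,cᵐ) : ℝⁿ → ℝᵐ be continuously differentiable, and let x̄ ∈ ℝⁿ be feasible for the problem min f(x) subject to c(x) ≤ 0, i.e. c(x̄) ≤ 0 componentwise. Suppose the Mangasarian–Fromovitz constraint qualification holds at x̄: there exists d ∈ ℝⁿ with ∇cⁱ(x̄)ᵀd < 0 for every i with cⁱ(x̄) = 0. Let H ∈ ℝ^{n×n} be symmetric positive definite, let D = { d ∈ ℝⁿ : c(x̄) + ∇c(x̄)ᵀd ≤ 0 }, and define ψ_o(x̄; H) = −min_{d∈D} (∇f(x̄)ᵀd + (1/2)dᵀHd). Then ψ_o(x̄; H) = 0 if and only if x̄ is a KKT point of the problem, i.e. there exists λ ∈ ℝᵐ with λ ≥ 0, ∇f(x̄) + ∇c(x̄)λ = 0, and λᵢ·cⁱ(x̄) = 0 for all i. -/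
noncomputable section

open Finset

lemma dotp_eq_inner {n : ℕ} (g d : Vec n) : dotp g d = inner ℝ g d := by
  simp [dotp, PiLp.inner_apply, RCLike.inner_apply, mul_comm]

lemma dotp_zero_right {n : ℕ} (g : Vec n) : dotp g (0 : Vec n) = 0 := by
  simp [dotp]

lemma dotp_smul_right {n : ℕ} (g d : Vec n) (t : ℝ) : dotp g (t • d) = t * dotp g d := by
  simp [dotp, Finset.mul_sum, PiLp.smul_apply, smul_eq_mul]
  exact Finset.sum_congr rfl fun i _ => by ring

lemma quad_smul {n : ℕ} (H : Matrix (Fin n) (Fin n) ℝ) (t : ℝ) (d : Vec n) :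
    quad H (t • d) = t^2 * quad H d := by
  simp only [quad, Finset.mul_sum]
  refine Finset.sum_congr rfl fun i _ => Finset.sum_congr rfl fun j _ => ?_
  simp [PiLp.smul_apply, smul_eq_mul]; ring

lemma quad_zero {n : ℕ} (H : Matrix (Fin n) (Fin n) ℝ) : quad H (0 : Vec n) = 0 := by
  simp [quad]

lemma quad_pos {n : ℕ} {H : Matrix (Fin n) (Fin n) ℝ} (hH : H.PosDef) {d : Vec n}
    (hd : d ≠ 0) : 0 < quad H d := by
  have hq : quad H d = dotProduct (d : Fin n → ℝ) (H.mulVec d) := by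
    simp [quad, dotProduct, Matrix.mulVec, Finset.mul_sum, mul_assoc]
  rw [hq]
  have := hH.dotProduct_mulVec_pos (x := (d : Fin n → ℝ)) (by exact fun h => hd (by ext i; exact congrFun h i))
  simpa using this

lemma quad_nonneg {n : ℕ} {H : Matrix (Fin n) (Fin n) ℝ} (hH : H.PosDef) (d : Vec n) :
    0 ≤ quad H d := by
  rcases eq_or_ne d 0 with rfl | hd
  · simp [quad_zero]
  · exact (quad_pos hH hd).le

lemma quad_continuous {n : ℕ} (H : Matrix (Fin n) (Fin n) ℝ) :
    Continuous fun d : Vec n => quad H d := by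
  unfold quad
  refine continuous_finset_sum _ fun i _ => continuous_finset_sum _ fun j _ => ?_
  have h : ∀ k : Fin n, Continuous fun d : Vec n => d k := fun k =>
    (EuclideanSpace.proj k).continuous
  exact ((h i).mul continuous_const).mul (h j)

lemma quad_coercive {n : ℕ} {H : Matrix (Fin n) (Fin n) ℝ} (hH : H.PosDef) :
    ∃ α > (0:ℝ), ∀ d : Vec n, α * ‖d‖^2 ≤ quad H d := by
  rcases Nat.eq_zero_or_pos n with hn | hn
  · subst hn
    refine ⟨1, one_pos, fun d => ?_⟩
    have hd : d = 0 := Subsingleton.elim d 0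
    simp [hd, quad_zero]
  · have hsph : (Metric.sphere (0 : Vec n) 1).Nonempty := by
      refine ⟨EuclideanSpace.single ⟨0, hn⟩ (1:ℝ), ?_⟩
      simp [EuclideanSpace.norm_single]
    obtain ⟨d0, hd0mem, hmin⟩ := (isCompact_sphere (0 : Vec n) 1).exists_isMinOn hsph
      (quad_continuous H).continuousOn
    have hd0 : ‖d0‖ = 1 := by simpa using hd0mem
    have hd0ne : d0 ≠ 0 := fun h => by simp [h] at hd0
    refine ⟨quad H d0, quad_pos hH hd0ne, fun d => ?_⟩
    rcases eq_or_ne d 0 with rfl | hd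
    · simp [quad_zero]
    · have hnd : (0:ℝ) < ‖d‖ := norm_pos_iff.2 hd
      set u : Vec n := ‖d‖⁻¹ • d with hu
      have hunorm : ‖u‖ = 1 := by
        rw [hu, norm_smul]; simp [abs_of_pos (inv_pos.2 hnd), inv_mul_cancel₀ hnd.ne']
      have hdu : d = ‖d‖ • u := by rw [hu, smul_smul, mul_inv_cancel₀ hnd.ne', one_smul]
      have hq : quad H d = ‖d‖^2 * quad H u := by conv_lhs => rw [hdu, quad_smul]
      rw [hq]
      have := hmin (by simpa using hunorm : u ∈ Metric.sphere (0:Vec n) 1)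
      calc quad H d0 * ‖d‖^2 ≤ quad H u * ‖d‖^2 :=
            mul_le_mul_of_nonneg_right this (by positivity)
        _ = ‖d‖^2 * quad H u := by ring

section Cone
variable {E : Type*} [NormedAddCommGroup E] [NormedSpace ℝ E]

lemma cone_caratheodory {k : ℕ} (w : Fin k → E) :
    ∀ N (lam : Fin k → ℝ), (∀ i, 0 ≤ lam i) →
      (Finset.univ.filter fun i => lam i ≠ 0).card ≤ N →
      ∃ mu : Fin k → ℝ, (∀ i, 0 ≤ mu i) ∧ (∑ i, mu i • w i = ∑ i, lam i • w i) ∧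
        LinearIndependent ℝ (fun i : {i // i ∈ Finset.univ.filter fun i => mu i ≠ 0} => w i) := by
  intro N
  induction N with
  | zero =>
      intro lam hlam hcard
      have hempty : (Finset.univ.filter fun i => lam i ≠ 0) = ∅ :=
        Finset.card_eq_zero.mp (Nat.le_zero.mp hcard)
      refine ⟨lam, hlam, rfl, ?_⟩
      have : IsEmpty {i // i ∈ Finset.univ.filter fun i => lam i ≠ 0} := by
        constructor; rintro ⟨i, hi⟩; rw [hempty] at hi; simp at hi
      exact linearIndependent_empty_type
  | succ N ih =>
      intro lam hlam hcard
      set s := Finset.univ.filter fun i => lam i ≠ 0 with hs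
      by_cases hli : LinearIndependent ℝ (fun i : {i // i ∈ s} => w i)
      · exact ⟨lam, hlam, rfl, hli⟩
      obtain ⟨g, hgsum, j0, hj0⟩ := Fintype.not_linearIndependent_iff.mp hli
      classical
      set gh : Fin k → ℝ := fun i => if h : i ∈ s then g ⟨i, h⟩ else 0 with hgh
      have hghsupp : ∀ i, gh i ≠ 0 → i ∈ s := by
        intro i hi; by_contra h; simp [hgh, h] at hi
      have hghsum : ∑ i, gh i • w i = 0 := by
        rw [← Finset.sum_subset (Finset.subset_univ s)
          (fun x _ hx => by simp [hgh, hx])]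
        rw [← Finset.sum_coe_sort s (fun i => gh i • w i)]
        rw [← hgsum]
        refine Finset.sum_congr rfl fun i _ => ?_
        simp [hgh, i.2]
      obtain ⟨G, hGsum, hGsupp, j, hjpos⟩ :
          ∃ G : Fin k → ℝ, (∑ i, G i • w i = 0) ∧ (∀ i, G i ≠ 0 → i ∈ s) ∧
            ∃ j, 0 < G j := by
        by_cases hpos : ∃ j, 0 < gh j
        · exact ⟨gh, hghsum, hghsupp, hpos⟩
        · push_neg at hpos
          refine ⟨-gh, by simp [hghsum], fun i hi => hghsupp i (by simpa using hi), j0.1, ?_⟩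
          have h1 : gh j0.1 = g j0 := by simp [hgh, j0.2]
          have h2 : gh j0.1 ≠ 0 := by rw [h1]; exact hj0
          have := lt_of_le_of_ne (hpos j0.1) h2
          simpa using this
      set T := Finset.univ.filter fun i => 0 < G i with hT
      have hjT : j ∈ T := by simp [hT, hjpos]
      obtain ⟨i0, hi0T, hi0min⟩ := T.exists_min_image (fun i => lam i / G i) ⟨j, hjT⟩
      have hGi0 : 0 < G i0 := by simpa [hT] using hi0T
      set t := lam i0 / G i0 with ht
      have htnn : 0 ≤ t := div_nonneg (hlam i0) hGi0.le
      set lam' : Fin k → ℝ := fun i => lam i - t * G i with hlam'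
      have hlam'nn : ∀ i, 0 ≤ lam' i := by
        intro i
        rcases lt_or_ge 0 (G i) with hGi | hGi
        · have hiT : i ∈ T := by simp [hT, hGi]
          have hmin := hi0min i hiT
          have hle : t * G i ≤ lam i := by
            rw [ht]
            calc lam i0 / G i0 * G i ≤ lam i / G i * G i :=
              mul_le_mul_of_nonneg_right hmin hGi.le
            _ = lam i := div_mul_cancel₀ _ hGi.ne'
          simp only [hlam']; linarith
        · have h1 : t * G i ≤ 0 := mul_nonpos_of_nonneg_of_nonpos htnn hGi
          have h2 := hlam i
          simp only [hlam']; linarith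
      have hsum' : ∑ i, lam' i • w i = ∑ i, lam i • w i := by
        simp only [hlam', sub_smul, Finset.sum_sub_distrib, mul_smul]
        rw [← Finset.smul_sum, hGsum, smul_zero, sub_zero]
      have hi0s : i0 ∈ s := hGsupp i0 hGi0.ne'
      have hlam'i0 : lam' i0 = 0 := by
        simp [hlam', ht, div_mul_cancel₀ _ hGi0.ne']
      have hsupp' : (Finset.univ.filter fun i => lam' i ≠ 0) ⊆ s.erase i0 := by
        intro i hi
        simp only [Finset.mem_filter, Finset.mem_univ, true_and] at hi
        refine Finset.mem_erase.mpr ⟨?_, ?_⟩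
        · rintro rfl; exact hi hlam'i0
        · by_contra h
          have h1 : lam i = 0 := by
            by_contra h2; exact h (by simp [hs, h2])
          have h2 : G i = 0 := by
            by_contra h2; exact h (hGsupp i h2)
          exact hi (by simp [hlam', h1, h2])
      have hcard' : (Finset.univ.filter fun i => lam' i ≠ 0).card ≤ N := by
        have h1 := Finset.card_le_card hsupp'
        have h2 : (s.erase i0).card = s.card - 1 := Finset.card_erase_of_mem hi0s
        omega
      obtain ⟨mu, hmunn, hmusum, hmuli⟩ := ih lam' hlam'nn hcard'
      exact ⟨mu, hmunn, hmusum.trans hsum', hmuli⟩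

lemma isClosed_coneGen [FiniteDimensional ℝ E] {k : ℕ} (w : Fin k → E) :
    IsClosed {x : E | ∃ lam : Fin k → ℝ, (∀ i, 0 ≤ lam i) ∧ x = ∑ i, lam i • w i} := by
  classical
  set C : Finset (Fin k) → Set E := fun s =>
    (fun lam : {i // i ∈ s} → ℝ => ∑ i, lam i • w i.1) '' {lam | ∀ i, 0 ≤ lam i} with hC
  have hCclosed : ∀ s : Finset (Fin k),
      LinearIndependent ℝ (fun i : {i // i ∈ s} => w i) → IsClosed (C s) := by
    intro s hli
    set T : ({i // i ∈ s} → ℝ) →ₗ[ℝ] E :=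
      Fintype.linearCombination ℝ (fun i : {i // i ∈ s} => w i) with hTdef
    have hTapp : ∀ lam, T lam = ∑ i, lam i • w i.1 := by
      intro lam; simp [hTdef, Fintype.linearCombination_apply]
    have hker : LinearMap.ker T = ⊥ := LinearMap.ker_eq_bot'.mpr (by
      intro lam hlam
      rw [hTapp] at hlam
      funext i
      exact Fintype.linearIndependent_iff.mp hli lam hlam i)
    have hce := T.isClosedEmbedding_of_injective hker
    have horth : IsClosed {lam : {i // i ∈ s} → ℝ | ∀ i, 0 ≤ lam i} := by
      have h1 : {lam : {i // i ∈ s} → ℝ | ∀ i, 0 ≤ lam i} = ⋂ i, {lam | 0 ≤ lam i} := by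
        ext lam; simp [Set.mem_iInter]
      rw [h1]
      exact isClosed_iInter fun i => isClosed_le continuous_const (continuous_apply i)
    have himg := hce.isClosedMap _ horth
    have heq : C s = ⇑T '' {lam | ∀ i, 0 ≤ lam i} :=
      (Set.image_congr fun lam _ => hTapp lam).symm
    rw [heq]; exact himg
  have hunion : {x : E | ∃ lam : Fin k → ℝ, (∀ i, 0 ≤ lam i) ∧ x = ∑ i, lam i • w i}
      = ⋃ s ∈ {s : Finset (Fin k) |
          LinearIndependent ℝ (fun i : {i // i ∈ s} => w i)}, C s := by
    ext x
    simp only [Set.mem_setOf_eq, Set.mem_iUnion, exists_prop]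
    constructor
    · rintro ⟨lam, hlam, rfl⟩
      obtain ⟨mu, hmunn, hmusum, hmuli⟩ := cone_caratheodory w
        (Finset.univ.filter fun i => lam i ≠ 0).card lam hlam le_rfl
      set s := Finset.univ.filter fun i => mu i ≠ 0 with hs
      refine ⟨s, hmuli, ⟨fun i => mu i.1, fun i => hmunn i.1, ?_⟩⟩
      show (∑ i : {i // i ∈ s}, mu i.1 • w i.1) = ∑ i, lam i • w i
      calc (∑ i : {i // i ∈ s}, mu i.1 • w i.1)
          = ∑ i ∈ s, mu i • w i := Finset.sum_coe_sort s (fun i => mu i • w i)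
        _ = ∑ i, mu i • w i := Finset.sum_subset (Finset.subset_univ s)
            (fun i _ hi => by
              have : mu i = 0 := by by_contra h; exact hi (by simp [hs, h])
              simp [this])
        _ = ∑ i, lam i • w i := hmusum
    · rintro ⟨s, hli, lam, hlam, hx⟩
      refine ⟨fun i => if h : i ∈ s then lam ⟨i, h⟩ else 0, fun i => ?_, ?_⟩
      · by_cases h : i ∈ s
        · simpa [h] using hlam ⟨i, h⟩
        · simp [h]
      · rw [← hx]
        show (fun lam : {i // i ∈ s} → ℝ => ∑ i, lam i • w i.1) lam
          = ∑ i, (if h : i ∈ s then lam ⟨i, h⟩ else 0) • w i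
        calc (∑ i : {i // i ∈ s}, lam i • w i.1)
            = ∑ i : {i // i ∈ s}, (if h : i.1 ∈ s then lam ⟨i.1, h⟩ else 0) • w i.1 :=
              Finset.sum_congr rfl fun i _ => by rw [dif_pos i.2]
          _ = ∑ i ∈ s, (if h : i ∈ s then lam ⟨i, h⟩ else 0) • w i :=
              Finset.sum_coe_sort s (fun i => (if h : i ∈ s then lam ⟨i, h⟩ else 0) • w i)
          _ = ∑ i, (if h : i ∈ s then lam ⟨i, h⟩ else 0) • w i :=
              Finset.sum_subset (Finset.subset_univ s) (fun i _ hi => by simp [hi])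
  rw [hunion]
  exact Set.Finite.isClosed_biUnion (Set.toFinite _) (fun s hs => hCclosed s hs)

end Cone

open scoped InnerProductSpace in
lemma farkas_cone {E : Type*} [NormedAddCommGroup E] [InnerProductSpace ℝ E]
    [FiniteDimensional ℝ E] {k : ℕ} (w : Fin k → E) (g : E)
    (h : ∀ d : E, (∀ i, 0 ≤ ⟪w i, d⟫_ℝ) → 0 ≤ ⟪g, d⟫_ℝ) :
    ∃ lam : Fin k → ℝ, (∀ i, 0 ≤ lam i) ∧ g = ∑ i, lam i • w i := by
  classical
  set K : ConvexCone ℝ E :=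
    { carrier := {x : E | ∃ lam : Fin k → ℝ, (∀ i, 0 ≤ lam i) ∧ x = ∑ i, lam i • w i}
      smul_mem' := by
        rintro c hc x ⟨lam, hlam, rfl⟩
        exact ⟨fun i => c * lam i, fun i => mul_nonneg hc.le (hlam i),
          by rw [Finset.smul_sum]; exact Finset.sum_congr rfl fun i _ => (mul_smul _ _ _).symm⟩
      add_mem' := by
        rintro x ⟨lam, hlam, rfl⟩ y ⟨mu, hmu, rfl⟩
        exact ⟨fun i => lam i + mu i, fun i => add_nonneg (hlam i) (hmu i),
          by rw [← Finset.sum_add_distrib]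
             exact Finset.sum_congr rfl fun i _ => (add_smul _ _ _).symm⟩ } with hK
  have hKne : (K : Set E).Nonempty := ⟨0, ⟨fun _ => 0, fun _ => le_rfl, by simp⟩⟩
  have hKcl : IsClosed (K : Set E) := isClosed_coneGen w
  have hwK : ∀ i, w i ∈ K := by
    intro i
    exact ⟨fun j => if j = i then 1 else 0, fun j => by positivity, by simp⟩
  set C : ProperCone ℝ E :=
    { carrier := (K : Set E)
      add_mem' := fun ha hb => K.add_mem ha hb
      zero_mem' := ⟨fun _ => 0, fun _ => le_rfl, by simp⟩
      smul_mem' := by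
        rintro c x ⟨lam, hlam, rfl⟩
        refine ⟨fun i => (c : ℝ) * lam i, fun i => mul_nonneg c.2 (hlam i), ?_⟩
        change (c : ℝ) • ∑ i, lam i • w i = _
        rw [Finset.smul_sum]
        exact Finset.sum_congr rfl fun i _ => (mul_smul _ _ _).symm
      isClosed' := hKcl } with hC
  have hmem : g ∈ C := by
    by_contra hg
    obtain ⟨y, hy, hgy⟩ := C.hyperplane_separation' hg
    have := h y fun i => hy (w i) (hwK i)
    linarith
  exact hmem

/-- At a feasible point `x̄` of `min f(x) s.t. c(x) ≤ 0` where MFCQ holds, the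
optimality measure `ψ_o(x̄;H) = −min_{d∈D} (∇f(x̄)ᵀd + (1/2)dᵀHd)`, where
`D = {d : c(x̄) + ∇c(x̄)ᵀd ≤ 0}`, vanishes if and only if `x̄` is a KKT point. -/
theorem psio_eq_zero_iff_kkt
    {n m : ℕ} (f : Vec n → ℝ) (c : Fin m → Vec n → ℝ)
    (hf : ContDiff ℝ 1 f) (hc : ∀ i, ContDiff ℝ 1 (c i))
    (xb : Vec n) (hfeas : ∀ i, c i xb ≤ 0)
    (hmfcq : ∃ d : Vec n, ∀ i, c i xb = 0 → dotp (gradient (c i) xb) d < 0)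
    (H : Matrix (Fin n) (Fin n) ℝ) (hH : H.PosDef) :
    (-(sInf {t | ∃ d : Vec n,
          (∀ i, c i xb + dotp (gradient (c i) xb) d ≤ 0) ∧
          t = dotp (gradient f xb) d + (1/2) * quad H d}) = 0)
      ↔ ∃ lam : Fin m → ℝ, (∀ i, 0 ≤ lam i) ∧
          gradient f xb + ∑ i, lam i • gradient (c i) xb = 0 ∧
          ∀ i, lam i * c i xb = 0 := by
  classical
  set g : Vec n := gradient f xb with hgdef
  set a : Fin m → Vec n := fun i => gradient (c i) xb with hadef
  set S : Set ℝ := {t | ∃ d : Vec n,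
      (∀ i, c i xb + dotp (a i) d ≤ 0) ∧
      t = dotp g d + (1/2) * quad H d} with hS
  obtain ⟨α, hα, hco⟩ := quad_coercive (n := n) hH
  have hbdd : BddBelow S := by
    refine ⟨-(‖g‖^2 / (2*α)), fun t ht => ?_⟩
    obtain ⟨d, _, rfl⟩ := ht
    have h1 : -(‖g‖ * ‖d‖) ≤ dotp g d := by
      rw [dotp_eq_inner]
      have h2 := abs_real_inner_le_norm g d
      have h3 := neg_abs_le (inner ℝ g d : ℝ)
      linarith
    have h2 := hco d
    rw [neg_le]
    rw [le_div_iff₀ (by positivity)]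
    nlinarith [sq_nonneg (α * ‖d‖ - ‖g‖), norm_nonneg d, norm_nonneg g]
  have h0S : (0:ℝ) ∈ S := by
    refine ⟨0, fun i => ?_, by simp [dotp_zero_right, quad_zero]⟩
    simpa [dotp_zero_right] using hfeas i
  constructor
  · -- ψ = 0 → KKT
    intro h0
    have hsinf : sInf S = 0 := by linarith [neg_eq_zero.mp h0]
    have hField : ∀ d : Vec n, (∀ i, c i xb + dotp (a i) d ≤ 0) →
        0 ≤ dotp g d + (1/2) * quad H d := by
      intro d hd
      have : sInf S ≤ dotp g d + (1/2) * quad H d := csInf_le hbdd ⟨d, hd, rfl⟩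
      linarith [hsinf ▸ this]
    -- first-order condition at d = 0
    have hFO : ∀ d : Vec n, (∀ i, c i xb = 0 → dotp (a i) d ≤ 0) → 0 ≤ dotp g d := by
      intro d hd
      set r : Fin m → ℝ := fun i =>
        if 0 < dotp (a i) d then (-(c i xb)) / dotp (a i) d else 1 with hr
      have hrpos : ∀ i, 0 < r i := by
        intro i
        by_cases hi : 0 < dotp (a i) d
        · have hbi : c i xb < 0 := by
            rcases lt_or_eq_of_le (hfeas i) with h | h
            · exact h
            · exact absurd (hd i h) (not_le.mpr hi)
          simp only [hr, if_pos hi]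
          exact div_pos (by linarith) hi
        · simp [hr, hi]
      set t0 : ℝ := (insert 1 (Finset.univ.image r)).min' (Finset.insert_nonempty _ _) with ht0
      have ht0mem := Finset.min'_mem (insert 1 (Finset.univ.image r))
        (Finset.insert_nonempty _ _)
      have ht0pos : 0 < t0 := by
        rcases Finset.mem_insert.mp ht0mem with h | h
        · rw [ht0, h]; norm_num
        · obtain ⟨i, _, hi⟩ := Finset.mem_image.mp h
          rw [ht0, ← hi]; exact hrpos i
      have ht0r : ∀ i, t0 ≤ r i := fun i => Finset.min'_le _ _
        (Finset.mem_insert_of_mem (Finset.mem_image_of_mem r (Finset.mem_univ i)))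
      have hkey : ∀ t : ℝ, 0 < t → t ≤ t0 →
          0 ≤ t * dotp g d + (1/2) * (t^2 * quad H d) := by
        intro t htpos htle
        have hmem : ∀ i, c i xb + dotp (a i) (t • d) ≤ 0 := by
          intro i
          rw [dotp_smul_right]
          by_cases hi : 0 < dotp (a i) d
          · have hri : t ≤ (-(c i xb)) / dotp (a i) d := by
              have := ht0r i; rw [hr] at this; simp only [if_pos hi] at this; linarith
            have : t * dotp (a i) d ≤ -(c i xb) := by
              rw [← le_div_iff₀ hi]; exact hri
            linarith
          · push_neg at hi
            have h1 : t * dotp (a i) d ≤ 0 :=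
              mul_nonpos_of_nonneg_of_nonpos htpos.le hi
            linarith [hfeas i]
        have := hField (t • d) hmem
        rw [dotp_smul_right, quad_smul] at this
        linarith
      by_contra hneg
      push_neg at hneg
      rcases le_or_gt (quad H d) 0 with hq | hq
      · have := hkey t0 ht0pos le_rfl
        nlinarith
      · set t1 := min t0 ((-(dotp g d)) / quad H d) with ht1
        have ht1pos : 0 < t1 := lt_min ht0pos (div_pos (by linarith) hq)
        have hk := hkey t1 ht1pos (min_le_left _ _)
        have ht1le : t1 * quad H d ≤ -(dotp g d) := by
          rw [← le_div_iff₀ hq]; exact min_le_right _ _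
        nlinarith
    -- Farkas
    set w : Fin m → Vec n := fun i => if c i xb = 0 then -(a i) else 0 with hw
    have hFark : ∃ lam : Fin m → ℝ, (∀ i, 0 ≤ lam i) ∧ g = ∑ i, lam i • w i := by
      apply farkas_cone
      intro d hd
      rw [← dotp_eq_inner]
      apply hFO
      intro i hi
      have h1 := hd i
      rw [← dotp_eq_inner] at h1
      have h2 : dotp (w i) d = -(dotp (a i) d) := by
        rw [hw]; simp only [if_pos hi]
        simp [dotp, PiLp.neg_apply]
      rw [h2] at h1; linarith
    obtain ⟨lam0, hlam0, hg⟩ := hFark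
    refine ⟨fun i => if c i xb = 0 then lam0 i else 0, fun i => ?_, ?_, fun i => ?_⟩
    · by_cases hi : c i xb = 0 <;> simp [hi, hlam0 i]
    · rw [hg, ← Finset.sum_add_distrib]
      refine Finset.sum_eq_zero fun i _ => ?_
      by_cases hi : c i xb = 0
      · simp [hw, hi, hadef, smul_neg]
      · simp [hw, hi]
    · by_cases hi : c i xb = 0 <;> simp [hi]
  · -- KKT → ψ = 0
    rintro ⟨lam, hlamnn, hgrad, hcomp⟩
    have hg : g = -∑ i, lam i • a i := by
      rw [hgdef, hadef]
      exact eq_neg_of_add_eq_zero_left hgrad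
    have hnn : ∀ t ∈ S, 0 ≤ t := by
      rintro t ⟨d, hd, rfl⟩
      have h1 : 0 ≤ dotp g d := by
        rw [dotp_eq_inner, hg, inner_neg_left, sum_inner]
        simp only [real_inner_smul_left]
        rw [neg_nonneg]
        refine Finset.sum_nonpos fun i _ => ?_
        have hdi : (inner ℝ (a i) d : ℝ) ≤ -(c i xb) := by
          rw [← dotp_eq_inner]; linarith [hd i]
        calc lam i * (inner ℝ (a i) d : ℝ) ≤ lam i * (-(c i xb)) :=
              mul_le_mul_of_nonneg_left hdi (hlamnn i)
          _ = -(lam i * c i xb) := by ring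
          _ = 0 := by rw [hcomp i]; ring
      linarith [quad_nonneg hH d]
    have hsinf : sInf S = 0 :=
      le_antisymm (csInf_le hbdd h0S) (le_csInf ⟨0, h0S⟩ hnn)
    rw [hsinf, neg_zero]
end
end

section
/- Let Δ > 0, Λ > 0, θ₁ ∈ (0,1), and let H ∈ ℝ^{n×n} be symmetric positive definite. Let g̃ ∈ ℝⁿ, c̃ ∈ ℝᵐ, M̃ ∈ ℝ^{m×n}, set ρ = min_{‖u‖≤Δ} ‖max{c̃ + M̃u, 0}‖_∞, and define l̃_v(d) = ‖max{c̃ + M̃d, 0}‖_∞. Let d* be the optimal solution of the QP min { g̃ᵀd + (1/2)dᵀHd : c̃ + M̃d ≤ ρ·1 } with a KKT multiplier λ̃ satisfying ‖λ̃‖_∞ ≤ Λ. Then g̃ᵀd* + (1/2)d*ᵀHd* ≤ mΛ·(l̃_v(0) − l̃_v(d*)), and consequently, for every π ≥ mΛ/(1−θ₁), the penalty update condition holds: −(g̃ᵀd* + (1/2)d*ᵀHd*) + π(l̃_v(0) − l̃_v(d*)) ≥ θ₁·π·(l̃_v(0) − l̃_v(d*)). -/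
noncomputable section

/-- If the relaxed QP solution `d*` has a KKT multiplier with `‖λ̃‖_∞ ≤ Λ`, then
`g̃ᵀd* + (1/2)d*ᵀHd* ≤ mΛ(l̃_v(0) − l̃_v(d*))`, and consequently the penalty update
condition holds for every `π ≥ mΛ/(1−θ₁)`. -/
theorem penalty_parameter_bounded
    {m n : ℕ} (Δ Λ θ1 : ℝ) (hΔ : 0 < Δ) (hΛ : 0 < Λ)
    (hθ1 : 0 < θ1) (hθ1' : θ1 < 1)
    (H : Matrix (Fin n) (Fin n) ℝ) (hH : H.PosDef)
    (gt : Vec n) (ct : Fin m → ℝ) (Mt : Matrix (Fin m) (Fin n) ℝ)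
    (ρ : ℝ) (hρ : ρ = vinf Δ ct Mt)
    (dstar : Vec n) (hfeas : ∀ i, ct i + Mt.mulVec dstar i ≤ ρ)
    (hopt : ∀ d : Vec n, (∀ i, ct i + Mt.mulVec d i ≤ ρ) →
      dotp gt dstar + (1/2) * quad H dstar ≤ dotp gt d + (1/2) * quad H d)
    (lam : Fin m → ℝ) (hlam0 : ∀ i, 0 ≤ lam i)
    (hstat : ∀ j, gt j + H.mulVec dstar j + ∑ i, Mt i j * lam i = 0)
    (hcomp : ∀ i, lam i * (ct i + Mt.mulVec dstar i - ρ) = 0)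
    (hlam : normInf lam ≤ Λ) :
    (dotp gt dstar + (1/2) * quad H dstar
        ≤ (m : ℝ) * Λ * (normInf (posv ct) - normInf (posv (ct + Mt.mulVec dstar))))
    ∧ ∀ π : ℝ, (m : ℝ) * Λ / (1 - θ1) ≤ π →
        -(dotp gt dstar + (1/2) * quad H dstar)
            + π * (normInf (posv ct) - normInf (posv (ct + Mt.mulVec dstar)))
          ≥ θ1 * π * (normInf (posv ct) - normInf (posv (ct + Mt.mulVec dstar))) := by
  set l0 := normInf (posv ct) with hl0def
  set ld := normInf (posv (ct + Mt.mulVec dstar)) with hlddef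
  -- nonnegativity of normInf
  have hnn : ∀ {k : ℕ} (u : Fin k → ℝ), 0 ≤ normInf u := fun u =>
    Real.iSup_nonneg fun i => abs_nonneg _
  -- ρ ≥ 0
  have hρ0 : 0 ≤ ρ := by
    rw [hρ, vinf]
    apply Real.sInf_nonneg
    rintro t ⟨d, _, rfl⟩
    exact hnn _
  -- ρ ≤ l0
  have hρl0 : ρ ≤ l0 := by
    rw [hρ, vinf]
    have hbdd : BddBelow {t | ∃ d : Vec n, ‖d‖ ≤ Δ ∧ t = normInf (posv (ct + Mt.mulVec d))} := by
      refine ⟨0, ?_⟩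
      rintro t ⟨d, _, rfl⟩
      exact hnn _
    have hmem : l0 ∈ {t | ∃ d : Vec n, ‖d‖ ≤ Δ ∧ t = normInf (posv (ct + Mt.mulVec d))} := by
      refine ⟨0, by simpa using hΔ.le, ?_⟩
      simp [Matrix.mulVec_zero, hl0def]
    exact csInf_le hbdd hmem
  -- ld ≤ ρ
  have hldρ : ld ≤ ρ := by
    rw [hlddef, normInf]
    apply Real.iSup_le _ hρ0
    intro i
    rw [posv, abs_of_nonneg (le_max_right _ _)]
    exact max_le (hfeas i) hρ0
  -- componentwise: ct i ≤ l0
  have hcl0 : ∀ i, ct i ≤ l0 := by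
    intro i
    have h1 : ct i ≤ |posv ct i| := by
      rw [posv, abs_of_nonneg (le_max_right _ _)]
      exact le_max_left _ _
    refine h1.trans ?_
    rw [hl0def, normInf]
    exact le_ciSup (f := fun i => |posv ct i|) (Set.Finite.bddAbove (Set.finite_range _)) i
  -- componentwise: lam i ≤ Λ
  have hlamΛ : ∀ i, lam i ≤ Λ := by
    intro i
    have h1 : lam i ≤ |lam i| := le_abs_self _
    refine h1.trans (LE.le.trans ?_ hlam)
    rw [normInf]
    exact le_ciSup (f := fun i => |lam i|) (Set.Finite.bddAbove (Set.finite_range _)) i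
  -- quadratic form is nonnegative
  have hq0 : 0 ≤ quad H dstar := by
    have h := hH.posSemidef.dotProduct_mulVec_nonneg (dstar : Fin n → ℝ)
    simpa [quad, dotProduct, Matrix.mulVec, Finset.mul_sum, mul_assoc] using h
  -- stationarity summed against dstar
  have h1 : ∑ j, (gt j + H.mulVec dstar j + ∑ i, Mt i j * lam i) * dstar j = 0 :=
    Finset.sum_eq_zero fun j _ => by rw [hstat j, zero_mul]
  have hq : ∑ j, H.mulVec dstar j * dstar j = quad H dstar := by
    simp only [quad, Matrix.mulVec, dotProduct, Finset.sum_mul]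
    exact Finset.sum_congr rfl fun i _ => Finset.sum_congr rfl fun j _ => by ring
  have hm : ∑ j, (∑ i, Mt i j * lam i) * dstar j = ∑ i, lam i * Mt.mulVec dstar i := by
    simp only [Finset.sum_mul]
    rw [Finset.sum_comm]
    refine Finset.sum_congr rfl fun i _ => ?_
    simp only [Matrix.mulVec, dotProduct, Finset.mul_sum]
    exact Finset.sum_congr rfl fun j _ => by ring
  have hcomp' : ∀ i, lam i * Mt.mulVec dstar i = lam i * (ρ - ct i) := by
    intro i
    have h := hcomp i
    nlinarith [h]
  have hsum : ∑ i, lam i * Mt.mulVec dstar i = ∑ i, lam i * (ρ - ct i) :=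
    Finset.sum_congr rfl fun i _ => hcomp' i
  have hexp : dotp gt dstar + quad H dstar + ∑ i, lam i * (ρ - ct i) = 0 := by
    have h2 : ∑ j, (gt j + H.mulVec dstar j + ∑ i, Mt i j * lam i) * dstar j
        = ∑ j, gt j * dstar j + ∑ j, H.mulVec dstar j * dstar j
          + ∑ j, (∑ i, Mt i j * lam i) * dstar j := by
      rw [← Finset.sum_add_distrib, ← Finset.sum_add_distrib]
      exact Finset.sum_congr rfl fun j _ => by ring
    rw [h2, hq, hm, hsum] at h1
    simpa [dotp] using h1
  -- key bound on each term
  have hterm : ∀ i ∈ Finset.univ, lam i * (ct i - ρ) ≤ Λ * (l0 - ρ) := by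
    intro i _
    have hd : ct i - ρ ≤ l0 - ρ := by linarith [hcl0 i]
    have hd0 : 0 ≤ l0 - ρ := by linarith
    calc lam i * (ct i - ρ) ≤ lam i * (l0 - ρ) :=
          mul_le_mul_of_nonneg_left hd (hlam0 i)
      _ ≤ Λ * (l0 - ρ) := mul_le_mul_of_nonneg_right (hlamΛ i) hd0
  have hsumbound : ∑ i, lam i * (ct i - ρ) ≤ (m : ℝ) * Λ * (l0 - ρ) := by
    calc ∑ i, lam i * (ct i - ρ) ≤ ∑ _i : Fin m, Λ * (l0 - ρ) :=
          Finset.sum_le_sum hterm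
      _ = (m : ℝ) * (Λ * (l0 - ρ)) := by
          rw [Finset.sum_const, Finset.card_univ, Fintype.card_fin, nsmul_eq_mul]
      _ = (m : ℝ) * Λ * (l0 - ρ) := by ring
  have hneg : ∑ i, lam i * (ct i - ρ) = -∑ i, lam i * (ρ - ct i) := by
    rw [eq_neg_iff_add_eq_zero, ← Finset.sum_add_distrib]
    exact Finset.sum_eq_zero fun i _ => by ring
  have hkey : dotp gt dstar + quad H dstar = ∑ i, lam i * (ct i - ρ) := by
    rw [hneg]; linarith
  have hmΛ0 : 0 ≤ (m : ℝ) * Λ := mul_nonneg (Nat.cast_nonneg m) hΛ.le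
  have hchain : (m : ℝ) * Λ * (l0 - ρ) ≤ (m : ℝ) * Λ * (l0 - ld) := by
    apply mul_le_mul_of_nonneg_left _ hmΛ0
    linarith
  have hpart1 : dotp gt dstar + (1/2) * quad H dstar ≤ (m : ℝ) * Λ * (l0 - ld) := by
    nlinarith [hkey, hsumbound, hchain, hq0]
  refine ⟨hpart1, ?_⟩
  intro π hπ
  have hD : 0 ≤ l0 - ld := by linarith
  have h1θ : 0 < 1 - θ1 := by linarith
  have hπ' : (m : ℝ) * Λ ≤ (1 - θ1) * π := by
    rw [div_le_iff₀ h1θ] at hπ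
    linarith
  have hπD : (m : ℝ) * Λ * (l0 - ld) ≤ (1 - θ1) * π * (l0 - ld) :=
    mul_le_mul_of_nonneg_right hπ' hD
  nlinarith [hpart1, hπD]
end
end

section
/- Let θ₁ ∈ (0,1), β ∈ (0,1), π ≥ 1, ε_g, ε_c, ε_J ≥ 0, r_l > 0, and E^ψ, E^v ≥ 0. Let real numbers Δq, Δq̃, ψ_o, ψ̃_o, ψ_v, ψ̃_v satisfy: (a) Δq ≥ Δq̃ − (ε_g·r_l + 2π·ε_c + π·ε_J·r_l); (b) Δq̃ ≥ θ₁²·(ψ̃_o + π·ψ̃_v); (c) |ψ̃_o − ψ_o| ≤ E^ψ and |ψ̃_v − ψ_v| ≤ E^v; (d) (β/2)·(ψ_o + π·ψ_v) ≥ max{E^ψ, ε_g·r_l/θ₁²} + π·max{E^v, (2ε_c + ε_J·r_l)/θ₁²}. Then Δq ≥ (1−β)·θ₁²·(ψ_o + π·ψ_v). In particular, with β = 1/2 one gets Δq ≥ (θ₁²/2)·(ψ_o + π·ψ_v). -/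
noncomputable section

/-- Outside the critical region, the exact quadratic merit-model decrease is at
least `(1−β)θ₁²(ψ_o + πψ_v)`. -/
theorem quad_improvement_outside_critical_region
    (θ1 β π εg εc εJ rl Eψ Ev Δq Δqt ψo ψot ψv ψvt : ℝ)
    (hθ1 : 0 < θ1) (hθ1' : θ1 < 1) (hβ : 0 < β) (hβ' : β < 1) (hπ : 1 ≤ π)
    (hεg : 0 ≤ εg) (hεc : 0 ≤ εc) (hεJ : 0 ≤ εJ) (hrl : 0 < rl)
    (hEψ : 0 ≤ Eψ) (hEv : 0 ≤ Ev)
    (ha : Δq ≥ Δqt - (εg * rl + 2 * π * εc + π * εJ * rl))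
    (hb : Δqt ≥ θ1 ^ 2 * (ψot + π * ψvt))
    (hcψ : |ψot - ψo| ≤ Eψ) (hcv : |ψvt - ψv| ≤ Ev)
    (hd : (β / 2) * (ψo + π * ψv)
      ≥ max Eψ (εg * rl / θ1 ^ 2) + π * max Ev ((2 * εc + εJ * rl) / θ1 ^ 2)) :
    Δq ≥ (1 - β) * θ1 ^ 2 * (ψo + π * ψv) := by
  have hθ2 : (0:ℝ) < θ1 ^ 2 := by positivity
  have h1 : Eψ ≤ max Eψ (εg * rl / θ1 ^ 2) := le_max_left _ _
  have h2 : εg * rl ≤ θ1 ^ 2 * max Eψ (εg * rl / θ1 ^ 2) := by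
    rw [← div_le_iff₀' hθ2] at *
    exact le_trans (le_max_right _ _) le_rfl
  have h3 : Ev ≤ max Ev ((2 * εc + εJ * rl) / θ1 ^ 2) := le_max_left _ _
  have h4 : 2 * εc + εJ * rl ≤ θ1 ^ 2 * max Ev ((2 * εc + εJ * rl) / θ1 ^ 2) := by
    rw [← div_le_iff₀' hθ2]
    exact le_max_right _ _
  have hψ1 : ψo - Eψ ≤ ψot := by
    have := abs_le.mp hcψ; linarith [this.1, this.2]
  have hv1 : ψv - Ev ≤ ψvt := by
    have := abs_le.mp hcv; linarith [this.1, this.2]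
  have hπ0 : (0:ℝ) ≤ π := by linarith
  have hθle : θ1 ^ 2 ≤ 1 := by nlinarith
  nlinarith [mul_le_mul_of_nonneg_left hv1 hπ0, mul_le_mul_of_nonneg_left h3 hπ0,
    mul_le_mul_of_nonneg_left h4 hπ0, mul_le_mul_of_nonneg_left hd hθ2.le,
    mul_pos hθ2 hθ2]
end
end
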